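/- arXiv:1901.09212 — 2 statements merged into one kernel-verified Lean document; each statement's English description precedes it below -/
import Mathlib

section
/- Let a be an integer, α a real number with 0 < α < 1, and u : ℤ → ℝ. For each ω > 0 let z(ω, ·) : ℤ → ℝ satisfy z(ω, a) = 0 and z(ω, k) − z(ω, k−1) = −ω z(ω, k) + μ_α(ω) u(k) for every integer k ≥ a+1. Then for every integer k ≥ a+1, the function ω ↦ z(ω, k) is integrable on (0, +∞) and ∫_0^{+∞} z(ω, k) dω = {}_a∇_k^{-α} u(k). (Equivalence of the fractional sum with the input-form unilateral frequency distributed model.) -/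
/-! Solving the implicit Euler recursion gives
`z(ω, a + n) = ∑_{i<n} μ_α(ω) u(a + n - i) / (1 + ω)^(i+1)` (with `μ_α = frequencyWeight α`),
so everything reduces to the moments `∫_0^∞ μ_α(ω) (1 + ω)^-(i+1) dω`. The substitution
`x = ω / (1 + ω)` turns these into Beta integrals `B(1 - α, α + i)`, and Euler's reflection
formula `Γ(α) Γ(1 - α) = π / sin(απ)` turns `sin(απ)/π · B(1 - α, α + i)` into the coefficient
`Γ(α + i) / (Γ(α) Γ(i + 1))` of the fractional sum. -/

/-- The `α`-th nabla fractional sum of `u : ℤ → ℝ` with initial instant `a`: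
`{}_a∇_k^{-α} u(k) = ∑_{i=0}^{k-a-1} (Γ(α+i)/(Γ(α) Γ(i+1))) u(k−i)`. -/
noncomputable def nablaFracSum (a : ℤ) (α : ℝ) (u : ℤ → ℝ) (k : ℤ) : ℝ :=
  ∑ i ∈ Finset.range (k - a).toNat,
    Real.Gamma (α + i) / (Real.Gamma α * Real.Gamma (i + 1)) * u (k - i)

open MeasureTheory Set Real

namespace BetaIntegral

variable {s t : ℝ}

theorem ofReal_rpow_mul_one_sub_rpow {x : ℝ} (hx : x ∈ Ioo 0 1) :
    ((x ^ (s - 1) * (1 - x) ^ (t - 1) : ℝ) : ℂ)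
      = (x : ℂ) ^ ((s : ℂ) - 1) * (1 - x) ^ ((t : ℂ) - 1) := by
  rw [Complex.ofReal_mul, Complex.ofReal_cpow hx.1.le, Complex.ofReal_cpow (sub_nonneg.2 hx.2.le)]
  push_cast
  rfl

theorem integrableOn_rpow_mul_one_sub_rpow (hs : 0 < s) (ht : 0 < t) :
    IntegrableOn (fun x : ℝ => x ^ (s - 1) * (1 - x) ^ (t - 1)) (Ioo 0 1) := by
  have hC := (Complex.betaIntegral_convergent (u := s) (v := t) (by simpa) (by simpa)).1
  refine IntegrableOn.congr_fun (hC.mono_set Ioo_subset_Ioc_self).re (fun x hx => ?_)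
    measurableSet_Ioo
  simp only [← ofReal_rpow_mul_one_sub_rpow hx, RCLike.re_to_complex, Complex.ofReal_re]

theorem integral_rpow_mul_one_sub_rpow (hs : 0 < s) (ht : 0 < t) :
    ∫ x in Ioo (0 : ℝ) 1, x ^ (s - 1) * (1 - x) ^ (t - 1) = ProbabilityTheory.beta s t := by
  have hC := (Complex.betaIntegral_convergent (u := s) (v := t) (by simpa) (by simpa)).1
  rw [ProbabilityTheory.beta_eq_betaIntegralReal s t hs ht, Complex.betaIntegral,
    intervalIntegral.integral_of_le zero_le_one, integral_Ioc_eq_integral_Ioo,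
    ← RCLike.re_to_complex, ← integral_re (hC.mono_set Ioo_subset_Ioc_self)]
  refine setIntegral_congr_fun measurableSet_Ioo (fun x hx => ?_)
  simp only [← ofReal_rpow_mul_one_sub_rpow hx, RCLike.re_to_complex, Complex.ofReal_re]

theorem strictMonoOn_div_one_add : StrictMonoOn (fun ω : ℝ => ω / (1 + ω)) (Ioi (-1)) := by
  intro x hx y hy hxy
  have hx' : (0 : ℝ) < 1 + x := by linarith [mem_Ioi.1 hx]
  have hy' : (0 : ℝ) < 1 + y := by linarith [mem_Ioi.1 hy]
  rw [div_lt_div_iff₀ hx' hy']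
  linarith

theorem image_div_one_add_Ioi : (fun ω : ℝ => ω / (1 + ω)) '' Ioi 0 = Ioo 0 1 := by
  ext x
  constructor
  · rintro ⟨ω, hω, rfl⟩
    have hω : (0 : ℝ) < ω := hω
    exact ⟨by positivity, (div_lt_one (by linarith)).2 (by linarith)⟩
  · rintro ⟨hx0, hx1⟩
    have h : (0 : ℝ) < 1 - x := sub_pos.2 hx1
    refine ⟨x / (1 - x), div_pos hx0 h, ?_⟩
    field_simp
    ring

theorem hasDerivAt_div_one_add {ω : ℝ} (hω : 1 + ω ≠ 0) :
    HasDerivAt (fun ω : ℝ => ω / (1 + ω)) ((1 + ω) ^ 2)⁻¹ ω := by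
  have h := (hasDerivAt_id' ω).fun_div ((hasDerivAt_id' ω).const_add 1) hω
  rwa [show (1 * (1 + ω) - ω * 1) / (1 + ω) ^ 2 = ((1 + ω) ^ 2)⁻¹ by ring] at h

theorem abs_inv_sq_smul_rpow_mul_one_sub_rpow {ω : ℝ} (hω : 0 < ω) :
    |((1 + ω) ^ 2)⁻¹| • ((ω / (1 + ω)) ^ (s - 1) * (1 - ω / (1 + ω)) ^ (t - 1))
      = ω ^ (s - 1) / (1 + ω) ^ (s + t) := by
  have hp : (0 : ℝ) < 1 + ω := by linarith
  have hsplit : (1 + ω) ^ (s + t) = (1 + ω) ^ (s - 1) * (1 + ω) ^ (t - 1) * (1 + ω) ^ 2 := by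
    rw [← rpow_natCast, ← rpow_add hp, ← rpow_add hp]
    ring_nf
  have hsub : 1 - ω / (1 + ω) = (1 + ω)⁻¹ := by
    field_simp
    ring
  rw [smul_eq_mul, abs_of_pos (by positivity), hsub, div_rpow hω.le hp.le, inv_rpow hp.le, hsplit]
  field_simp

theorem integrableOn_rpow_div_one_add_rpow_Ioi (hs : 0 < s) (ht : 0 < t) :
    IntegrableOn (fun ω : ℝ => ω ^ (s - 1) / (1 + ω) ^ (s + t)) (Ioi 0) := by
  have h := integrableOn_rpow_mul_one_sub_rpow hs ht
  rw [← image_div_one_add_Ioi, integrableOn_image_iff_integrableOn_abs_deriv_smul measurableSet_Ioi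
    (fun ω hω => (hasDerivAt_div_one_add (by linarith [mem_Ioi.1 hω])).hasDerivWithinAt)
    (strictMonoOn_div_one_add.injOn.mono (Ioi_subset_Ioi (by norm_num)))] at h
  exact h.congr_fun (fun ω hω => abs_inv_sq_smul_rpow_mul_one_sub_rpow hω) measurableSet_Ioi

theorem integral_rpow_div_one_add_rpow_Ioi (hs : 0 < s) (ht : 0 < t) :
    ∫ ω in Ioi (0 : ℝ), ω ^ (s - 1) / (1 + ω) ^ (s + t) = ProbabilityTheory.beta s t := by
  rw [← integral_rpow_mul_one_sub_rpow hs ht, ← image_div_one_add_Ioi,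
    integral_image_eq_integral_abs_deriv_smul measurableSet_Ioi
      (fun ω hω => (hasDerivAt_div_one_add (by linarith [mem_Ioi.1 hω])).hasDerivWithinAt)
      (strictMonoOn_div_one_add.injOn.mono (Ioi_subset_Ioi (by norm_num)))]
  exact setIntegral_congr_fun measurableSet_Ioi
    (fun ω hω => (abs_inv_sq_smul_rpow_mul_one_sub_rpow hω).symm)

end BetaIntegral

noncomputable def frequencyWeight (α ω : ℝ) : ℝ :=
  Real.sin (α * π) / (π * ω ^ α)

theorem frequencyWeight_div_one_add_pow {α ω : ℝ} (hω : 0 < ω) (n : ℕ) :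
    frequencyWeight α ω / (1 + ω) ^ (n + 1)
      = Real.sin (α * π) / π * (ω ^ ((1 - α) - 1) / (1 + ω) ^ ((1 - α) + (α + n))) := by
  rw [show (1 - α) + (α + n) = ((n + 1 : ℕ) : ℝ) by push_cast; ring, rpow_natCast,
    show (1 - α) - 1 = -α by ring, rpow_neg hω.le, frequencyWeight]
  field_simp

section

variable {α : ℝ}

theorem integrableOn_frequencyWeight_div_one_add_pow (hα0 : 0 < α) (hα1 : α < 1) (n : ℕ) :
    IntegrableOn (fun ω => frequencyWeight α ω / (1 + ω) ^ (n + 1)) (Ioi 0) :=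
  IntegrableOn.congr_fun ((BetaIntegral.integrableOn_rpow_div_one_add_rpow_Ioi (sub_pos.2 hα1)
    (by positivity : 0 < α + n)).const_mul _)
    (fun _ hω => (frequencyWeight_div_one_add_pow hω n).symm) measurableSet_Ioi

theorem integral_frequencyWeight_div_one_add_pow (hα0 : 0 < α) (hα1 : α < 1) (n : ℕ) :
    ∫ ω in Ioi (0 : ℝ), frequencyWeight α ω / (1 + ω) ^ (n + 1)
      = Real.Gamma (α + n) / (Real.Gamma α * Real.Gamma (n + 1)) := by
  rw [setIntegral_congr_fun measurableSet_Ioi (fun _ hω => frequencyWeight_div_one_add_pow hω n),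
    integral_const_mul, BetaIntegral.integral_rpow_div_one_add_rpow_Ioi (sub_pos.2 hα1)
    (by positivity), ProbabilityTheory.beta, show (1 - α) + (α + n) = (n : ℝ) + 1 by ring]
  have hreflect := Real.Gamma_mul_Gamma_one_sub α
  have hsin : Real.sin (α * π) ≠ 0 :=
    (Real.sin_pos_of_pos_of_lt_pi (by positivity) (by nlinarith [pi_pos])).ne'
  have hΓα : Real.Gamma α ≠ 0 := (Real.Gamma_pos_of_pos hα0).ne'
  have hΓn : Real.Gamma (n + 1) ≠ 0 := (Real.Gamma_pos_of_pos (by positivity)).ne'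
  rw [mul_comm π α] at hreflect
  field_simp at hreflect ⊢
  linear_combination hreflect

end

theorem eq_sum_div_pow_of_sub_eq_neg_mul_add {a : ℤ} {ω : ℝ} {v z : ℤ → ℝ} (hω : 1 + ω ≠ 0)
    (h0 : z a = 0) (h : ∀ k, a + 1 ≤ k → z k - z (k - 1) = -ω * z k + v k) (n : ℕ) :
    z (a + n) = ∑ i ∈ Finset.range n, v (a + n - i) / (1 + ω) ^ (i + 1) := by
  induction n with
  | zero => simpa using h0
  | succ n ih =>
    have hstep : z (a + (n + 1 : ℕ)) = (z (a + n) + v (a + (n + 1 : ℕ))) / (1 + ω) := by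
      have hk := h (a + (n + 1 : ℕ)) (by omega)
      rw [show a + (n + 1 : ℕ) - 1 = a + n by push_cast; ring] at hk
      field_simp
      linear_combination hk
    rw [hstep, ih, Finset.sum_range_succ', add_div, Finset.sum_div]
    congr 1
    · refine Finset.sum_congr rfl (fun i _ => ?_)
      rw [show a + (n + 1 : ℕ) - (i + 1 : ℕ) = a + n - i by push_cast; ring]
      field_simp
      ring
    · simp

theorem nablaFracSum_add_natCast (a : ℤ) (α : ℝ) (u : ℤ → ℝ) (n : ℕ) :
    nablaFracSum a α u (a + n)
      = ∑ i ∈ Finset.range n,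
          Real.Gamma (α + i) / (Real.Gamma α * Real.Gamma (i + 1)) * u (a + n - i) := by
  simp [nablaFracSum]

/-- **Input-form unilateral frequency distributed model.**
If for each `ω > 0`, `z(ω,·)` satisfies `z(ω,a) = 0` and
`z(ω,k) − z(ω,k−1) = −ω z(ω,k) + μ_α(ω) u(k)` for `k ≥ a+1`, then for every `k ≥ a+1` the
function `ω ↦ z(ω,k)` is integrable on `(0,∞)` and
`∫_0^∞ z(ω,k) dω = {}_a∇_k^{-α} u(k)`, where `μ_α(ω) = sin(απ)/(π ω^α)`. -/
theorem input_form_frequency_distributed_model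
    (a : ℤ) (α : ℝ) (hα0 : 0 < α) (hα1 : α < 1) (u : ℤ → ℝ)
    (z : ℝ → ℤ → ℝ)
    (hz0 : ∀ ω : ℝ, 0 < ω → z ω a = 0)
    (hz : ∀ ω : ℝ, 0 < ω → ∀ k : ℤ, a + 1 ≤ k →
      z ω k - z ω (k - 1) =
        -ω * z ω k + Real.sin (α * Real.pi) / (Real.pi * ω ^ α) * u k) :
    ∀ k : ℤ, a + 1 ≤ k →
      MeasureTheory.IntegrableOn (fun ω : ℝ => z ω k) (Set.Ioi (0 : ℝ)) ∧
      (∫ ω in Set.Ioi (0 : ℝ), z ω k) = nablaFracSum a α u k := by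
  intro k hk
  obtain ⟨n, rfl⟩ : ∃ n : ℕ, k = a + n := ⟨(k - a).toNat, by omega⟩
  have hsum : EqOn (fun ω => z ω (a + n))
      (fun ω => ∑ i ∈ Finset.range n, frequencyWeight α ω / (1 + ω) ^ (i + 1) * u (a + n - i))
      (Ioi 0) := fun ω hω => by
    dsimp only
    rw [eq_sum_div_pow_of_sub_eq_neg_mul_add (by linarith [mem_Ioi.1 hω]) (hz0 ω hω) (hz ω hω)]
    simp only [frequencyWeight, mul_div_right_comm]
  have hterm (i : ℕ) := (integrableOn_frequencyWeight_div_one_add_pow hα0 hα1 i).mul_const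
    (u (a + n - i))
  refine ⟨IntegrableOn.congr_fun (integrable_finsetSum _ fun i _ => hterm i) hsum.symm
    measurableSet_Ioi, ?_⟩
  rw [setIntegral_congr_fun measurableSet_Ioi hsum, integral_finsetSum _ fun i _ => hterm i,
    nablaFracSum_add_natCast]
  refine Finset.sum_congr rfl fun i _ => ?_
  rw [integral_mul_const, integral_frequencyWeight_div_one_add_pow hα0 hα1]
end

section
/- Let a be an integer, α a real number with 0 < α < 1, and u : ℤ → ℝ. For each ω > 0 let z(ω, ·) : ℤ → ℝ satisfy z(ω, a) = 0 and z(ω, k) − z(ω, k−1) = −ω z(ω, k) + √(μ_α(ω)) u(k) for every integer k ≥ a+1. Then for every integer k ≥ a+1, the function ω ↦ √(μ_α(ω)) z(ω, k) is integrable on (0, +∞) and ∫_0^{+∞} √(μ_α(ω)) z(ω, k) dω = {}_a∇_k^{-α} u(k). (Equivalence of the fractional sum with the balance-form unilateral frequency distributed model.) -/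
open MeasureTheory Set Real

/-! Solving the recursion gives `z(ω, k) = √μ_α(ω) ∑_{i < k-a} (1 + ω)^{-(i+1)} u(k - i)`, so
`√μ_α(ω) z(ω, k)` is a finite combination of the functions `μ_α(ω) (1 + ω)^{-(i+1)}`. The
substitution `ω = x / (1 - x)` turns `∫_0^∞ ω^{-α} (1 + ω)^{-(i+1)} dω` into the Beta integral
`B(1 - α, α + i)`, and Euler's reflection formula `Γ(α) Γ(1 - α) = π / sin(απ)` turns
`sin(απ) / π · B(1 - α, α + i)` into the coefficient `Γ(α + i) / (Γ(α) Γ(i + 1))`. -/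

theorem eq_sum_pow_mul_of_recurrence {R : Type*} [Semiring R] {x f : ℤ → R} {r : R} {a : ℤ}
    (h0 : x a = 0) (hrec : ∀ k, a + 1 ≤ k → x k = r * (x (k - 1) + f k)) :
    ∀ k, a ≤ k → x k = ∑ i ∈ Finset.range (k - a).toNat, r ^ (i + 1) * f (k - i) := by
  intro k hk
  induction k, hk using Int.leInduction with
  | base => simp [h0]
  | succ k hk ih =>
    rw [hrec (k + 1) (by omega), add_sub_cancel_right, ih,
      show (k + 1 - a).toNat = (k - a).toNat + 1 by omega, Finset.sum_range_succ', mul_add,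
      Finset.mul_sum]
    push_cast
    simp only [pow_succ' r, mul_assoc, add_sub_add_right_eq_sub, sub_zero, pow_zero, one_mul]

theorem Complex.ofReal_cpow_mul_one_sub_cpow {x : ℝ} (hx : x ∈ Icc 0 1) (p q : ℝ) :
    (x : ℂ) ^ ((p : ℂ) - 1) * (1 - (x : ℂ)) ^ ((q : ℂ) - 1) =
      ((x ^ (p - 1) * (1 - x) ^ (q - 1) : ℝ) : ℂ) := by
  rw [Complex.ofReal_mul, Complex.ofReal_cpow hx.1, Complex.ofReal_cpow (sub_nonneg.2 hx.2)]
  push_cast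
  rfl

section Beta

variable {p q : ℝ}

theorem integrableOn_rpow_mul_one_sub_rpow (hp : 0 < p) (hq : 0 < q) :
    IntegrableOn (fun x : ℝ => x ^ (p - 1) * (1 - x) ^ (q - 1)) (Ioo 0 1) := by
  have h := (Complex.betaIntegral_convergent (u := p) (v := q) (by simpa) (by simpa)).1
  refine IntegrableOn.congr_fun (h.mono_set Ioo_subset_Ioc_self).re (fun x hx => ?_) measurableSet_Ioo
  rw [Complex.ofReal_cpow_mul_one_sub_cpow (Ioo_subset_Icc_self hx), RCLike.re_to_complex, Complex.ofReal_re]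

theorem integral_rpow_mul_one_sub_rpow (hp : 0 < p) (hq : 0 < q) :
    ∫ x in Ioo 0 1, x ^ (p - 1) * (1 - x) ^ (q - 1) = Gamma p * Gamma q / Gamma (p + q) := by
  have h := Complex.betaIntegral_eq_Gamma_mul_div p q (by simpa) (by simpa)
  rw [Complex.betaIntegral, intervalIntegral.integral_of_le zero_le_one,
    setIntegral_congr_fun measurableSet_Ioc
      (fun x hx => Complex.ofReal_cpow_mul_one_sub_cpow (Ioc_subset_Icc_self hx) p q),
    integral_complex_ofReal, integral_Ioc_eq_integral_Ioo, ← Complex.ofReal_add, Complex.Gamma_ofReal,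
    Complex.Gamma_ofReal, Complex.Gamma_ofReal] at h
  exact_mod_cast h

theorem image_div_one_sub_Ioo : (fun x : ℝ => x / (1 - x)) '' Ioo 0 1 = Ioi 0 := by
  refine Subset.antisymm ?_ fun ω (hω : 0 < ω) => ⟨ω / (1 + ω), ⟨by positivity, ?_⟩, ?_⟩
  · rintro _ ⟨x, hx, rfl⟩
    exact div_pos hx.1 (sub_pos.2 hx.2)
  · rw [div_lt_one (by positivity)]; linarith
  · field_simp; ring

theorem injOn_div_one_sub : InjOn (fun x : ℝ => x / (1 - x)) (Ioo 0 1) := by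
  intro x hx y hy h
  have := sub_pos.2 hx.2
  have := sub_pos.2 hy.2
  field_simp at h
  linarith

theorem hasDerivAt_div_one_sub {x : ℝ} (hx : x ≠ 1) :
    HasDerivAt (fun x : ℝ => x / (1 - x)) ((1 - x) ^ 2)⁻¹ x := by
  refine ((hasDerivAt_id' x).div ((hasDerivAt_id' x).const_sub 1)
    (sub_ne_zero.2 hx.symm)).congr_deriv ?_
  ring

theorem abs_inv_sq_smul_rpow_mul_one_add_rpow {x : ℝ} (hx : x ∈ Ioo 0 1) :
    |((1 - x) ^ 2)⁻¹| • ((x / (1 - x)) ^ (p - 1) * (1 + x / (1 - x)) ^ (-(p + q))) =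
      x ^ (p - 1) * (1 - x) ^ (q - 1) := by
  have hy : 0 < 1 - x := sub_pos.2 hx.2
  have h1 : 1 + x / (1 - x) = (1 - x)⁻¹ := by field_simp; ring
  have h2 : (1 - x) ^ (q - 1) * (1 - x) ^ (p - 1) * (1 - x) ^ 2 = (1 - x) ^ (p + q) := by
    rw [← rpow_natCast, ← rpow_add hy, ← rpow_add hy]
    norm_num; ring_nf
  rw [h1, inv_rpow hy.le, rpow_neg hy.le, inv_inv, div_rpow hx.1.le hy.le, smul_eq_mul,
    abs_of_pos (by positivity), ← h2]
  have : 0 < (1 - x) ^ (p - 1) := by positivity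
  field_simp

theorem integrableOn_rpow_mul_one_add_rpow_neg (hp : 0 < p) (hq : 0 < q) :
    IntegrableOn (fun ω : ℝ => ω ^ (p - 1) * (1 + ω) ^ (-(p + q))) (Ioi 0) := by
  rw [← image_div_one_sub_Ioo, integrableOn_image_iff_integrableOn_abs_deriv_smul measurableSet_Ioo
    (fun x hx => (hasDerivAt_div_one_sub hx.2.ne).hasDerivWithinAt) injOn_div_one_sub]
  exact (integrableOn_rpow_mul_one_sub_rpow hp hq).congr_fun
    (fun x hx => (abs_inv_sq_smul_rpow_mul_one_add_rpow hx).symm) measurableSet_Ioo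

theorem integral_rpow_mul_one_add_rpow_neg (hp : 0 < p) (hq : 0 < q) :
    ∫ ω in Ioi 0, ω ^ (p - 1) * (1 + ω) ^ (-(p + q)) = Gamma p * Gamma q / Gamma (p + q) := by
  rw [← image_div_one_sub_Ioo, integral_image_eq_integral_abs_deriv_smul measurableSet_Ioo
    (fun x hx => (hasDerivAt_div_one_sub hx.2.ne).hasDerivWithinAt) injOn_div_one_sub,
    setIntegral_congr_fun measurableSet_Ioo fun x hx => abs_inv_sq_smul_rpow_mul_one_add_rpow hx,
    integral_rpow_mul_one_sub_rpow hp hq]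

end Beta

/-- The weight `μ_α(ω)` of the frequency distributed model. -/
noncomputable def fdmWeight (α ω : ℝ) : ℝ :=
  sin (α * π) / (π * ω ^ α)

section Weight

variable {α : ℝ}

theorem fdmWeight_pos (hα0 : 0 < α) (hα1 : α < 1) {ω : ℝ} (hω : 0 < ω) : 0 < fdmWeight α ω := by
  have : 0 < sin (α * π) := sin_pos_of_pos_of_lt_pi (by positivity) (by nlinarith [pi_pos])
  unfold fdmWeight
  positivity

theorem fdmWeight_mul_inv_one_add_pow (i : ℕ) {ω : ℝ} (hω : 0 < ω) :
    fdmWeight α ω * ((1 + ω) ^ (i + 1))⁻¹ =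
      sin (α * π) / π * (ω ^ ((1 - α) - 1) * (1 + ω) ^ (-((1 - α) + (α + i)))) := by
  have : 0 < 1 + ω := by positivity
  rw [show (1 - α) - 1 = -α by ring, show -((1 - α) + (α + i)) = -((i + 1 : ℕ) : ℝ) by push_cast; ring,
    rpow_neg hω.le, rpow_neg this.le, rpow_natCast, fdmWeight]
  field_simp

theorem integrableOn_fdmWeight_mul_inv_one_add_pow (hα0 : 0 < α) (hα1 : α < 1) (i : ℕ) :
    IntegrableOn (fun ω => fdmWeight α ω * ((1 + ω) ^ (i + 1))⁻¹) (Ioi 0) :=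
  IntegrableOn.congr_fun
    ((integrableOn_rpow_mul_one_add_rpow_neg (sub_pos.2 hα1) (by positivity)).const_mul _) (fun _ hω => (fdmWeight_mul_inv_one_add_pow i hω).symm) measurableSet_Ioi

theorem integral_fdmWeight_mul_inv_one_add_pow (hα0 : 0 < α) (hα1 : α < 1) (i : ℕ) :
    ∫ ω in Ioi 0, fdmWeight α ω * ((1 + ω) ^ (i + 1))⁻¹ =
      Gamma (α + i) / (Gamma α * Gamma (i + 1)) := by
  rw [setIntegral_congr_fun measurableSet_Ioi fun _ hω => fdmWeight_mul_inv_one_add_pow i hω,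
    integral_const_mul, integral_rpow_mul_one_add_rpow_neg (sub_pos.2 hα1) (by positivity),
    show 1 - α + (α + i) = i + 1 by ring]
  have : 0 < sin (π * α) := sin_pos_of_pos_of_lt_pi (by positivity) (by nlinarith [pi_pos])
  have hreflect : Gamma α * Gamma (1 - α) * sin (π * α) = π := by
    rw [Gamma_mul_Gamma_one_sub, div_mul_cancel₀ _ this.ne']
  have : 0 < Gamma (1 - α) := Gamma_pos_of_pos (sub_pos.2 hα1)
  have : 0 < Gamma (i + 1) := Gamma_pos_of_pos (by positivity)
  rw [mul_comm α π]
  field_simp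
  linear_combination hreflect

end Weight

/-- **Balance-form unilateral frequency distributed model.**
If for each `ω > 0`, `z(ω,·)` satisfies `z(ω,a) = 0` and
`z(ω,k) − z(ω,k−1) = −ω z(ω,k) + √(μ_α(ω)) u(k)` for `k ≥ a+1`, then for every `k ≥ a+1`
the function `ω ↦ √(μ_α(ω)) z(ω,k)` is integrable on `(0,∞)` and
`∫_0^∞ √(μ_α(ω)) z(ω,k) dω = {}_a∇_k^{-α} u(k)`, where `μ_α(ω) = sin(απ)/(π ω^α)`. -/
theorem balance_form_frequency_distributed_model
    (a : ℤ) (α : ℝ) (hα0 : 0 < α) (hα1 : α < 1) (u : ℤ → ℝ)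
    (z : ℝ → ℤ → ℝ)
    (hz0 : ∀ ω : ℝ, 0 < ω → z ω a = 0)
    (hz : ∀ ω : ℝ, 0 < ω → ∀ k : ℤ, a + 1 ≤ k →
      z ω k - z ω (k - 1) =
        -ω * z ω k + Real.sqrt (Real.sin (α * Real.pi) / (Real.pi * ω ^ α)) * u k) :
    ∀ k : ℤ, a + 1 ≤ k →
      MeasureTheory.IntegrableOn
        (fun ω : ℝ => Real.sqrt (Real.sin (α * Real.pi) / (Real.pi * ω ^ α)) * z ω k)
        (Set.Ioi (0 : ℝ)) ∧
      (∫ ω in Set.Ioi (0 : ℝ),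
          Real.sqrt (Real.sin (α * Real.pi) / (Real.pi * ω ^ α)) * z ω k) =
        nablaFracSum a α u k := by
  intro k hk
  change IntegrableOn (fun ω => √(fdmWeight α ω) * z ω k) _ ∧
    ∫ ω in Ioi 0, √(fdmWeight α ω) * z ω k = _
  have hz_sum (ω : ℝ) (hω : ω ∈ Ioi 0) : √(fdmWeight α ω) * z ω k =
      ∑ i ∈ Finset.range (k - a).toNat, fdmWeight α ω * ((1 + ω) ^ (i + 1))⁻¹ * u (k - i) := by
    have hω : 0 < ω := hω
    have hz_rec (j : ℤ) (hj : a + 1 ≤ j) :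
        z ω j = (1 + ω)⁻¹ * (z ω (j - 1) + √(fdmWeight α ω) * u j) := by
      have := hz ω hω j hj
      unfold fdmWeight
      field_simp
      linarith
    rw [eq_sum_pow_mul_of_recurrence (hz0 ω hω) hz_rec k (by omega), Finset.mul_sum]
    refine Finset.sum_congr rfl fun i _ => ?_
    rw [inv_pow]
    linear_combination (((1 + ω) ^ (i + 1))⁻¹ * u (k - i)) *
      mul_self_sqrt (fdmWeight_pos hα0 hα1 hω).le
  have hint (i : ℕ) : IntegrableOn
      (fun ω => fdmWeight α ω * ((1 + ω) ^ (i + 1))⁻¹ * u (k - i)) (Ioi 0) :=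
    (integrableOn_fdmWeight_mul_inv_one_add_pow hα0 hα1 i).mul_const _
  refine ⟨IntegrableOn.congr_fun (integrable_finsetSum _ fun i _ => hint i)
    (fun ω hω => (hz_sum ω hω).symm) measurableSet_Ioi, ?_⟩
  rw [setIntegral_congr_fun measurableSet_Ioi hz_sum, integral_finsetSum _ fun i _ => hint i]
  exact Finset.sum_congr rfl fun i _ => by
    rw [integral_mul_const, integral_fdmWeight_mul_inv_one_add_pow hα0 hα1]
end
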